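/- arXiv:2304.02590 — 9 statements merged into one kernel-verified Lean document; each statement's English description precedes it below -/
import Mathlib

section
/- Let A and B be stable matching instances on the same n workers and n firms such that every worker has the same preference order in A as in B (i.e., A and B are (0,n)). Then for any two matchings M₁, M₂ that are stable under both A and B: the join M₁ ∨_A M₂ and the meet M₁ ∧_A M₂ are bijections, they satisfy M₁ ∨_A M₂ = M₁ ∨_B M₂ and M₁ ∧_A M₂ = M₁ ∧_B M₂, and both are stable under both A and B. In particular, M_A ∩ M_B is a sublattice of the lattice of A-stable matchings and of the lattice of B-stable matchings. -/
/-! The lattice structure comes from opposition of interests: if a worker other than `f`'s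
partner in a stable matching `M` weakly prefers `f` to its own `M`-partner, then `f` strictly
prefers its `M`-partner to that worker. Hence each firm gets its least preferred candidate from
the meet and its most preferred one from the join, which rules out both collisions and blocking
pairs. The join picks, worker by worker, the partner the meet rejects, so it is injective because
the meet is surjective. Both maps depend only on the workers' preferences, which `A` and `B`
share. -/

/-- A stable matching instance on `n` workers and `n` firms: each worker `w` has a strict
total preference order over firms encoded by an injective rank function `wRank w`
(lower rank = more preferred), and each firm `f` has one over workers (`fRank f`). -/
structure SMInstance (n : ℕ) where
  wRank : Fin n → Fin n → Fin n
  fRank : Fin n → Fin n → Fin n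
  wRank_inj : ∀ w, Function.Injective (wRank w)
  fRank_inj : ∀ f, Function.Injective (fRank f)

/-- `(w, f)` is a blocking pair of the matching `M` under instance `I`:
`M w ≠ f`, `w` strictly prefers `f` to `M w`, and `f` strictly prefers `w`
to its `M`-partner (the worker `w'` with `M w' = f`). -/
def Blocking {n : ℕ} (I : SMInstance n) (M : Fin n → Fin n) (w f : Fin n) : Prop :=
  M w ≠ f ∧ I.wRank w f < I.wRank w (M w) ∧
    ∃ w', M w' = f ∧ I.fRank f w < I.fRank f w'

/-- A matching (bijection) is stable under `I` if it has no blocking pair. -/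
def IsStable {n : ℕ} (I : SMInstance n) (M : Fin n → Fin n) : Prop :=
  Function.Bijective M ∧ ∀ w f, ¬ Blocking I M w f

/-- The join `M₁ ∨_I M₂`: each worker gets its less preferred partner. -/
def joinMap {n : ℕ} (I : SMInstance n) (M₁ M₂ : Fin n → Fin n) : Fin n → Fin n :=
  fun w => if I.wRank w (M₁ w) < I.wRank w (M₂ w) then M₂ w else M₁ w

/-- The meet `M₁ ∧_I M₂`: each worker gets its more preferred partner. -/
def meetMap {n : ℕ} (I : SMInstance n) (M₁ M₂ : Fin n → Fin n) : Fin n → Fin n :=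
  fun w => if I.wRank w (M₁ w) < I.wRank w (M₂ w) then M₁ w else M₂ w

open Function

theorem Function.Injective.ite_swap {α : Type*} [Finite α] {f g : α → α} (p : α → Prop)
    [DecidablePred p] (hf : Injective f) (hg : Injective g)
    (h : Injective fun a => if p a then f a else g a) :
    Injective fun a => if p a then g a else f a := by
  have hsurj := Finite.injective_iff_surjective.mp h
  intro a b hab
  by_contra hne
  wlog hpa : p a generalizing a b
  · by_cases hpb : p b
    · exact this hab.symm (Ne.symm hne) hpb
    · simp only [hpa, hpb, if_false] at hab
      exact hne (hf hab)
  by_cases hpb : p b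
  · simp only [hpa, hpb, if_true] at hab
    exact hne (hg hab)
  simp only [hpa, hpb, if_true, if_false] at hab
  obtain ⟨u, hu⟩ := hsurj (g a)
  by_cases hpu : p u
  · simp only [hpu, if_true] at hu
    exact hpb (hf (hu.trans hab) ▸ hpu)
  · simp only [hpu, if_false] at hu
    exact hpu (hg hu ▸ hpa)

variable {n : ℕ} {I : SMInstance n} {M M₁ M₂ : Fin n → Fin n}

theorem eq_or_of_meetMap_eq {w f : Fin n} (h : meetMap I M₁ M₂ w = f) :
    M₁ w = f ∨ M₂ w = f := by
  unfold meetMap at h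
  split_ifs at h <;> tauto

theorem eq_or_of_joinMap_eq {w f : Fin n} (h : joinMap I M₁ M₂ w = f) :
    M₁ w = f ∨ M₂ w = f := by
  unfold joinMap at h
  split_ifs at h <;> tauto

theorem meetMap_eq_of_joinMap_ne {w f : Fin n} (hf : M₁ w = f ∨ M₂ w = f)
    (hjoin : joinMap I M₁ M₂ w ≠ f) : meetMap I M₁ M₂ w = f := by
  unfold meetMap
  unfold joinMap at hjoin
  split_ifs at hjoin ⊢ <;> tauto

theorem wRank_meetMap_le_left (w : Fin n) :
    I.wRank w (meetMap I M₁ M₂ w) ≤ I.wRank w (M₁ w) := by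
  unfold meetMap
  split_ifs with h
  exacts [le_rfl, not_lt.mp h]

theorem wRank_meetMap_le_right (w : Fin n) :
    I.wRank w (meetMap I M₁ M₂ w) ≤ I.wRank w (M₂ w) := by
  unfold meetMap
  split_ifs with h
  exacts [h.le, le_rfl]

theorem meetMap_eq_of_wRank_eq {A B : SMInstance n} (hW : A.wRank = B.wRank)
    (M₁ M₂ : Fin n → Fin n) : meetMap A M₁ M₂ = meetMap B M₁ M₂ := by
  unfold meetMap; rw [hW]

theorem joinMap_eq_of_wRank_eq {A B : SMInstance n} (hW : A.wRank = B.wRank)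
    (M₁ M₂ : Fin n → Fin n) : joinMap A M₁ M₂ = joinMap B M₁ M₂ := by
  unfold joinMap; rw [hW]

namespace IsStable

theorem fRank_lt_of_wRank_lt (hM : IsStable I M) {w w' f : Fin n} (hw' : M w' = f)
    (hlt : I.wRank w f < I.wRank w (M w)) : I.fRank f w' < I.fRank f w := by
  have hMw : M w ≠ f := fun h => (h ▸ hlt).false
  have hne : w' ≠ w := by rintro rfl; exact hMw hw'
  exact lt_of_le_of_ne (not_lt.mp fun hblock => hM.2 w f ⟨hMw, hlt, w', hw', hblock⟩)
    ((I.fRank_inj f).ne hne)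

theorem fRank_lt_of_wRank_le (hM : IsStable I M) {w w' f : Fin n} (hw' : M w' = f)
    (hne : w ≠ w') (hle : I.wRank w f ≤ I.wRank w (M w)) : I.fRank f w' < I.fRank f w := by
  have hMw : M w ≠ f := fun h => hne (hM.1.1 (h.trans hw'.symm))
  exact hM.fRank_lt_of_wRank_lt hw' (lt_of_le_of_ne hle ((I.wRank_inj w).ne hMw.symm))

theorem fRank_lt_of_meetMap_eq (h₁ : IsStable I M₁) (h₂ : IsStable I M₂)
    {w w' f : Fin n} (hw : meetMap I M₁ M₂ w = f)
    (hw' : M₁ w' = f ∨ M₂ w' = f) (hne : w ≠ w') : I.fRank f w' < I.fRank f w := by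
  rcases hw' with hw' | hw'
  · exact h₁.fRank_lt_of_wRank_le hw' hne (hw ▸ wRank_meetMap_le_left w)
  · exact h₂.fRank_lt_of_wRank_le hw' hne (hw ▸ wRank_meetMap_le_right w)

theorem meetMap_injective (h₁ : IsStable I M₁) (h₂ : IsStable I M₂) :
    Injective (meetMap I M₁ M₂) := by
  intro w w' hww'
  by_contra hne
  have hlt := fRank_lt_of_meetMap_eq h₁ h₂ rfl (eq_or_of_meetMap_eq hww'.symm) hne
  have hgt := fRank_lt_of_meetMap_eq h₁ h₂ hww'.symm (eq_or_of_meetMap_eq rfl) (Ne.symm hne)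
  exact lt_asymm hlt hgt

theorem joinMap_injective (h₁ : IsStable I M₁) (h₂ : IsStable I M₂) :
    Injective (joinMap I M₁ M₂) :=
  Injective.ite_swap (fun w => I.wRank w (M₁ w) < I.wRank w (M₂ w)) h₁.1.1 h₂.1.1
    (meetMap_injective h₁ h₂)

theorem meet (h₁ : IsStable I M₁) (h₂ : IsStable I M₂) : IsStable I (meetMap I M₁ M₂) := by
  refine ⟨Finite.injective_iff_bijective.mp (meetMap_injective h₁ h₂), ?_⟩
  rintro w f ⟨-, hlt, w', hw', hblock⟩
  have hpartner : I.fRank f w' < I.fRank f w := by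
    rcases eq_or_of_meetMap_eq hw' with h | h
    · exact h₁.fRank_lt_of_wRank_lt h (hlt.trans_le (wRank_meetMap_le_left w))
    · exact h₂.fRank_lt_of_wRank_lt h (hlt.trans_le (wRank_meetMap_le_right w))
  exact lt_asymm hblock hpartner

theorem fRank_joinMap_le (h₁ : IsStable I M₁) (h₂ : IsStable I M₂) {u w' f : Fin n}
    (hu : M₁ u = f ∨ M₂ u = f) (hw' : joinMap I M₁ M₂ w' = f) :
    I.fRank f w' ≤ I.fRank f u := by
  rcases eq_or_ne u w' with rfl | hne
  · exact le_rfl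
  have hmeet : meetMap I M₁ M₂ u = f :=
    meetMap_eq_of_joinMap_ne hu fun h => hne (joinMap_injective h₁ h₂ (h.trans hw'.symm))
  exact (fRank_lt_of_meetMap_eq h₁ h₂ hmeet (eq_or_of_joinMap_eq hw') hne).le

theorem join (h₁ : IsStable I M₁) (h₂ : IsStable I M₂) : IsStable I (joinMap I M₁ M₂) := by
  refine ⟨Finite.injective_iff_bijective.mp (joinMap_injective h₁ h₂), ?_⟩
  rintro w f ⟨-, hlt, w', hw', hblock⟩
  rcases eq_or_of_joinMap_eq (rfl : joinMap I M₁ M₂ w = _) with h | h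
  · obtain ⟨u, hu⟩ := h₁.1.2 f
    have hfu := h₁.fRank_lt_of_wRank_lt hu (h ▸ hlt)
    exact lt_asymm hfu (hblock.trans_le (fRank_joinMap_le h₁ h₂ (Or.inl hu) hw'))
  · obtain ⟨u, hu⟩ := h₂.1.2 f
    have hfu := h₂.fRank_lt_of_wRank_lt hu (h ▸ hlt)
    exact lt_asymm hfu (hblock.trans_le (fRank_joinMap_le h₁ h₂ (Or.inr hu) hw'))

end IsStable

theorem stmt0_general {n : ℕ} (A B : SMInstance n)
    (hW : A.wRank = B.wRank)
    (M₁ M₂ : Fin n → Fin n)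
    (h₁ : IsStable A M₁ ∧ IsStable B M₁)
    (h₂ : IsStable A M₂ ∧ IsStable B M₂) :
    Function.Bijective (joinMap A M₁ M₂) ∧ Function.Bijective (meetMap A M₁ M₂) ∧
    joinMap A M₁ M₂ = joinMap B M₁ M₂ ∧ meetMap A M₁ M₂ = meetMap B M₁ M₂ ∧
    (IsStable A (joinMap A M₁ M₂) ∧ IsStable B (joinMap A M₁ M₂)) ∧
    (IsStable A (meetMap A M₁ M₂) ∧ IsStable B (meetMap A M₁ M₂)) := by
  have hjoin := joinMap_eq_of_wRank_eq hW M₁ M₂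
  have hmeet := meetMap_eq_of_wRank_eq hW M₁ M₂
  have hjoinA := h₁.1.join h₂.1
  have hmeetA := h₁.1.meet h₂.1
  exact ⟨hjoinA.1, hmeetA.1, hjoin, hmeet, ⟨hjoinA, hjoin ▸ h₁.2.join h₂.2⟩,
    ⟨hmeetA, hmeet ▸ h₁.2.meet h₂.2⟩⟩

/-- if A and B are (0,n) (all workers have identical preferences),
then for M₁, M₂ stable under both A and B, the join and meet (taken in A) are
bijections, agree with the join and meet taken in B, and are stable under both. -/
theorem stmt0 {n : ℕ} (hn : 1 ≤ n) (A B : SMInstance n)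
    (hW : A.wRank = B.wRank)
    (M₁ M₂ : Fin n → Fin n)
    (h₁ : IsStable A M₁ ∧ IsStable B M₁)
    (h₂ : IsStable A M₂ ∧ IsStable B M₂) :
    Function.Bijective (joinMap A M₁ M₂) ∧ Function.Bijective (meetMap A M₁ M₂) ∧
    joinMap A M₁ M₂ = joinMap B M₁ M₂ ∧ meetMap A M₁ M₂ = meetMap B M₁ M₂ ∧
    (IsStable A (joinMap A M₁ M₂) ∧ IsStable B (joinMap A M₁ M₂)) ∧
    (IsStable A (meetMap A M₁ M₂) ∧ IsStable B (meetMap A M₁ M₂)) :=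
  stmt0_general A B hW M₁ M₂ h₁ h₂
end

section
/- Let A and B be stable matching instances on the same n workers and n firms such that every worker has the same preference order in A as in B. If the set M_A ∩ M_B of matchings stable under both A and B is nonempty, then it contains a worker-optimal matching M*: a matching M* ∈ M_A ∩ M_B such that for every M ∈ M_A ∩ M_B and every worker w, w weakly prefers M*(w) to M(w). -/
/-!
The meet of two matchings stable under `I` (every worker takes the partner it prefers) is again
stable under `I`, and it depends only on the workers' preferences, so the matchings stable under
both `A` and `B` are closed under meets. A finite nonempty family of worker rank profiles that is
closed under pointwise lower bounds has a least element, which is the worker-optimal matching.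
-/

section

variable {n : ℕ}

def SMInstance.rankProfile (I : SMInstance n) (M : Fin n → Fin n) : Fin n → Fin n :=
  fun w => I.wRank w (M w)

lemma meetMap_eq_or (I : SMInstance n) (M₁ M₂ : Fin n → Fin n) (w : Fin n) :
    meetMap I M₁ M₂ w = M₁ w ∨ meetMap I M₁ M₂ w = M₂ w := by
  unfold meetMap; split_ifs
  exacts [Or.inl rfl, Or.inr rfl]

lemma rankProfile_meetMap_le_left (I : SMInstance n) (M₁ M₂ : Fin n → Fin n) :
    I.rankProfile (meetMap I M₁ M₂) ≤ I.rankProfile M₁ := fun w => by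
  unfold SMInstance.rankProfile meetMap; split_ifs with h
  · exact le_rfl
  · exact not_lt.mp h

lemma rankProfile_meetMap_le_right (I : SMInstance n) (M₁ M₂ : Fin n → Fin n) :
    I.rankProfile (meetMap I M₁ M₂) ≤ I.rankProfile M₂ := fun w => by
  unfold SMInstance.rankProfile meetMap; split_ifs with h
  · exact h.le
  · exact le_rfl

lemma meetMap_eq_of_wRank_eq_s2 {I J : SMInstance n} (h : I.wRank = J.wRank)
    (M₁ M₂ : Fin n → Fin n) : meetMap I M₁ M₂ = meetMap J M₁ M₂ := by
  unfold meetMap; rw [h]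

lemma blocking_of_wRank_lt {I : SMInstance n} {M : Fin n → Fin n} {w f w' : Fin n}
    (hw : I.wRank w f < I.wRank w (M w)) (hw' : M w' = f)
    (hf : I.fRank f w < I.fRank f w') : Blocking I M w f :=
  ⟨fun h => (h ▸ hw).false, hw, w', hw', hf⟩

/-- A firm cannot be the weakly preferred partner of two different workers under two stable
matchings: the firm would prefer one of them, and that worker would block the other matching. -/
lemma IsStable.eq_of_map_eq {I : SMInstance n} {M₁ M₂ : Fin n → Fin n}
    (h₁ : IsStable I M₁) (h₂ : IsStable I M₂) {w w' : Fin n} (heq : M₁ w = M₂ w')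
    (hw : I.wRank w (M₁ w) ≤ I.wRank w (M₂ w))
    (hw' : I.wRank w' (M₂ w') ≤ I.wRank w' (M₁ w')) : w = w' := by
  by_contra hne
  have hM₂w : M₂ w ≠ M₁ w := fun h => hne (h₂.1.injective (h.trans heq))
  have hM₁w' : M₁ w' ≠ M₂ w' := fun h => hne (h₁.1.injective (heq.trans h.symm))
  have hlt : I.wRank w (M₁ w) < I.wRank w (M₂ w) :=
    hw.lt_of_ne fun h => hM₂w (I.wRank_inj w h).symm
  have hlt' : I.wRank w' (M₂ w') < I.wRank w' (M₁ w') :=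
    hw'.lt_of_ne fun h => hM₁w' (I.wRank_inj w' h).symm
  rcases ((I.fRank_inj (M₁ w)).ne hne).lt_or_gt with hf | hf
  · exact h₂.2 w _ (blocking_of_wRank_lt hlt heq.symm hf)
  · exact h₁.2 w' _ (blocking_of_wRank_lt (heq ▸ hlt') rfl hf)

lemma IsStable.meet_s2 {I : SMInstance n} {M₁ M₂ : Fin n → Fin n}
    (h₁ : IsStable I M₁) (h₂ : IsStable I M₂) : IsStable I (meetMap I M₁ M₂) := by
  have hle₁ := rankProfile_meetMap_le_left I M₁ M₂
  have hle₂ := rankProfile_meetMap_le_right I M₁ M₂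
  have hinj : Function.Injective (meetMap I M₁ M₂) := by
    intro w w' hww'
    rcases meetMap_eq_or I M₁ M₂ w with hw | hw <;>
      rcases meetMap_eq_or I M₁ M₂ w' with hw' | hw' <;> rw [hw, hw'] at hww'
    · exact h₁.1.injective hww'
    · exact h₁.eq_of_map_eq h₂ hww' (hw ▸ hle₂ w) (hw' ▸ hle₁ w')
    · exact (h₁.eq_of_map_eq h₂ hww'.symm (hw' ▸ hle₂ w') (hw ▸ hle₁ w)).symm
    · exact h₂.1.injective hww'
  refine ⟨Finite.injective_iff_bijective.mp hinj, ?_⟩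
  rintro w f ⟨-, hlt, w', rfl, hf⟩
  rcases meetMap_eq_or I M₁ M₂ w' with h | h <;> rw [h] at hlt hf
  · exact h₁.2 w _ (blocking_of_wRank_lt (hlt.trans_le (hle₁ w)) rfl hf)
  · exact h₂.2 w _ (blocking_of_wRank_lt (hlt.trans_le (hle₂ w)) rfl hf)

end

theorem stmt2_general {n : ℕ} (A B : SMInstance n)
    (hW : A.wRank = B.wRank)
    (hne : ∃ M, IsStable A M ∧ IsStable B M) :
    ∃ Mstar, (IsStable A Mstar ∧ IsStable B Mstar) ∧
      ∀ M, (IsStable A M ∧ IsStable B M) →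
        ∀ w, A.wRank w (Mstar w) ≤ A.wRank w (M w) := by
  set S := {M | IsStable A M ∧ IsStable B M}
  have hdir : DirectedOn (fun p q => q ≤ p) (A.rankProfile '' S) := by
    rintro _ ⟨M₁, hM₁, rfl⟩ _ ⟨M₂, hM₂, rfl⟩
    refine ⟨_, ⟨meetMap A M₁ M₂, ⟨hM₁.1.meet_s2 hM₂.1, ?_⟩, rfl⟩,
      rankProfile_meetMap_le_left A M₁ M₂,
      rankProfile_meetMap_le_right A M₁ M₂⟩
    exact meetMap_eq_of_wRank_eq_s2 hW M₁ M₂ ▸ hM₁.2.meet_s2 hM₂.2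
  obtain ⟨_, hmin⟩ := (A.rankProfile '' S).toFinite.exists_minimal (Set.Nonempty.image _ hne)
  obtain ⟨⟨Mstar, hMstar, rfl⟩, hleast⟩ := hdir.minimal_iff_isLeast.mp hmin
  exact ⟨Mstar, hMstar, fun M hM => hleast ⟨M, hM, rfl⟩⟩

/-- if A and B have identical worker preferences and some matching is
stable under both, then there is a worker-optimal matching stable under both. -/
theorem stmt2 {n : ℕ} (hn : 1 ≤ n) (A B : SMInstance n)
    (hW : A.wRank = B.wRank)
    (hne : ∃ M, IsStable A M ∧ IsStable B M) :
    ∃ Mstar, (IsStable A Mstar ∧ IsStable B Mstar) ∧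
      ∀ M, (IsStable A M ∧ IsStable B M) →
        ∀ w, A.wRank w (Mstar w) ≤ A.wRank w (M w) :=
  stmt2_general A B hW hne
end

section
/- There exist stable matching instances A and B on the same 5 workers and 5 firms in which every worker has the same preference order in A as in B, together with matchings M₁, M₂, M₃, M₄ each stable under A but not stable under B, such that M₁ ∨_A M₂ is stable under both A and B and M₃ ∧_A M₄ is stable under both A and B. Hence the set M_A \ M_B need not be closed under the join of the lattice of A-stable matchings, nor under its meet (it is not a semi-sublattice of either kind). -/
instance {n : ℕ} (I : SMInstance n) (M : Fin n → Fin n) (w f : Fin n) :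
    Decidable (Blocking I M w f) := by unfold Blocking; infer_instance

instance {n : ℕ} (I : SMInstance n) (M : Fin n → Fin n) : Decidable (IsStable I M) := by
  unfold IsStable; infer_instance

theorem not_isStable_of_blocking {n : ℕ} {I : SMInstance n} {M : Fin n → Fin n} {w f : Fin n}
    (h : Blocking I M w f) : ¬ IsStable I M :=
  fun hM => hM.2 w f h

def workerRank : Fin 5 → Fin 5 → Fin 5 :=
  ![![3, 4, 1, 2, 0], ![2, 1, 4, 3, 0], ![4, 2, 3, 0, 1], ![0, 1, 3, 4, 2], ![4, 2, 3, 1, 0]]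

def instA : SMInstance 5 where
  wRank := workerRank
  fRank := ![![3, 4, 0, 2, 1], ![0, 2, 4, 3, 1], ![2, 3, 4, 0, 1], ![3, 1, 4, 0, 2], ![0, 1, 4, 2, 3]]
  wRank_inj := by decide
  fRank_inj := by decide

def instB : SMInstance 5 where
  wRank := workerRank
  fRank := ![![4, 1, 0, 2, 3], ![0, 3, 4, 2, 1], ![3, 0, 2, 1, 4], ![2, 0, 3, 4, 1], ![0, 4, 3, 2, 1]]
  wRank_inj := by decide
  fRank_inj := by decide

def μ₁ : Fin 5 → Fin 5 := ![4, 1, 0, 2, 3]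

def μ₂ : Fin 5 → Fin 5 := ![4, 3, 2, 0, 1]

theorem isStable_instA_μ₁ : IsStable instA μ₁ := by decide

theorem isStable_instA_μ₂ : IsStable instA μ₂ := by decide

theorem blocking_instB_μ₁ : Blocking instB μ₁ 3 1 := by decide

theorem blocking_instB_μ₂ : Blocking instB μ₂ 1 0 := by decide

theorem joinMap_instA_μ₁_μ₂ : joinMap instA μ₁ μ₂ = ![4, 3, 0, 2, 1] := by decide

theorem meetMap_instA_μ₁_μ₂ : meetMap instA μ₁ μ₂ = ![4, 1, 2, 0, 3] := by decide

theorem isStable_joinMap_instA_μ₁_μ₂ :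
    IsStable instA (joinMap instA μ₁ μ₂) ∧ IsStable instB (joinMap instA μ₁ μ₂) := by
  rw [joinMap_instA_μ₁_μ₂]
  exact ⟨by decide, by decide⟩

theorem isStable_meetMap_instA_μ₁_μ₂ :
    IsStable instA (meetMap instA μ₁ μ₂) ∧ IsStable instB (meetMap instA μ₁ μ₂) := by
  rw [meetMap_instA_μ₁_μ₂]
  exact ⟨by decide, by decide⟩

/-- there are (0,n) instances A, B on 5 workers and 5 firms and matchings
M₁, M₂, M₃, M₄ stable under A but not B whose A-join (resp. A-meet) is stable under
both A and B; so the difference set need not be a join or meet semi-sublattice. -/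
theorem stmt4 :
    ∃ (A B : SMInstance 5), A.wRank = B.wRank ∧
      ∃ M₁ M₂ M₃ M₄ : Fin 5 → Fin 5,
        (IsStable A M₁ ∧ ¬ IsStable B M₁) ∧
        (IsStable A M₂ ∧ ¬ IsStable B M₂) ∧
        (IsStable A M₃ ∧ ¬ IsStable B M₃) ∧
        (IsStable A M₄ ∧ ¬ IsStable B M₄) ∧
        (IsStable A (joinMap A M₁ M₂) ∧ IsStable B (joinMap A M₁ M₂)) ∧
        (IsStable A (meetMap A M₃ M₄) ∧ IsStable B (meetMap A M₃ M₄)) := by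
  have h₁ : IsStable instA μ₁ ∧ ¬ IsStable instB μ₁ :=
    ⟨isStable_instA_μ₁, not_isStable_of_blocking blocking_instB_μ₁⟩
  have h₂ : IsStable instA μ₂ ∧ ¬ IsStable instB μ₂ :=
    ⟨isStable_instA_μ₂, not_isStable_of_blocking blocking_instB_μ₂⟩
  exact ⟨instA, instB, rfl, μ₁, μ₂, μ₁, μ₂, h₁, h₂, h₁, h₂,
    isStable_joinMap_instA_μ₁_μ₂, isStable_meetMap_instA_μ₁_μ₂⟩
end

section
/- Let Y be an instance on n workers and n firms in which every worker w has a strict total (linear) preference order over the firms and every firm f has a strict partial order >_f over the workers. If M₁ and M₂ are both strongly stable under Y, then the map sending each worker w to the less preferred of M₁(w), M₂(w) and the map sending each worker w to the more preferred of M₁(w), M₂(w) are both bijections and are both strongly stable under Y. Hence the strongly stable matchings of Y form a lattice under these operations. -/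
/-- An instance with linear worker preferences (injective rank functions) and a
strict partial order fPref f over workers for each firm f. -/
structure PartialInstance (n : ℕ) where
  wRank : Fin n → Fin n → Fin n
  wRank_inj : ∀ w, Function.Injective (wRank w)
  fPref : Fin n → Fin n → Fin n → Prop
  fPref_irrefl : ∀ f w, ¬ fPref f w w
  fPref_trans : ∀ f a b c, fPref f a b → fPref f b c → fPref f a c

/-- Strong blocking pair: w strictly prefers f to M w, and f does not strictly
prefer its M-partner to w (it prefers w or is incomparable). -/
def StronglyBlocking {n : ℕ} (Y : PartialInstance n) (M : Fin n → Fin n) (w f : Fin n) : Prop :=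
  M w ≠ f ∧ Y.wRank w f < Y.wRank w (M w) ∧ ∃ w', M w' = f ∧ ¬ Y.fPref f w' w

/-- A matching is strongly stable if it is a bijection with no strong blocking pair. -/
def StronglyStable {n : ℕ} (Y : PartialInstance n) (M : Fin n → Fin n) : Prop :=
  Function.Bijective M ∧ ∀ w f, ¬ StronglyBlocking Y M w f

/-- Join: each worker gets its less preferred partner. -/
def pJoin {n : ℕ} (Y : PartialInstance n) (M₁ M₂ : Fin n → Fin n) : Fin n → Fin n :=
  fun w => if Y.wRank w (M₁ w) < Y.wRank w (M₂ w) then M₂ w else M₁ w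

/-- Meet: each worker gets its more preferred partner. -/
def pMeet {n : ℕ} (Y : PartialInstance n) (M₁ M₂ : Fin n → Fin n) : Fin n → Fin n :=
  fun w => if Y.wRank w (M₁ w) < Y.wRank w (M₂ w) then M₁ w else M₂ w

open Function Set

lemma Set.injective_piecewise_of_image_eq {α β : Type*} {s : Set α} [∀ x, Decidable (x ∈ s)]
    {f g : α → β} (hf : Injective f) (hg : Injective g) (h : f '' s = g '' s) :
    Injective (s.piecewise f g) := by
  refine (injective_piecewise_iff s).2 ⟨hf.injOn, hg.injOn, fun x hx y hy hxy => hy ?_⟩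
  obtain ⟨z, hz, hzx⟩ : f x ∈ g '' s := h ▸ mem_image_of_mem f hx
  exact hg (hzx.trans hxy) ▸ hz

variable {n : ℕ} {Y : PartialInstance n} {A B M : Fin n → Fin n}

lemma PartialInstance.wRank_lt_of_not_lt {w a b : Fin n} (hab : a ≠ b)
    (h : ¬ Y.wRank w a < Y.wRank w b) : Y.wRank w b < Y.wRank w a :=
  (not_lt.1 h).lt_of_ne fun hr => hab (Y.wRank_inj w hr).symm

lemma StronglyStable.fPref_of_wRank_lt (hM : StronglyStable Y M) {w w' f : Fin n}
    (hw : Y.wRank w f < Y.wRank w (M w)) (hw' : M w' = f) : Y.fPref f w' w := by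
  by_contra h
  exact hM.2 w f ⟨fun he => hw.ne (he ▸ rfl), hw, w', hw', h⟩

lemma StronglyStable.wRank_lt_of_apply_eq (hA : StronglyStable Y A) (hB : StronglyStable Y B)
    {x y : Fin n} (hx : Y.wRank x (A x) < Y.wRank x (B x)) (hy : B y = A x) :
    Y.wRank y (A y) < Y.wRank y (B y) := by
  have hyx : y ≠ x := by
    rintro rfl
    exact hx.ne (congrArg _ hy.symm)
  have hAy : A y ≠ B y := hy ▸ fun h => hyx (hA.1.1 h)
  by_contra hcon
  have hyx_pref : Y.fPref (A x) y x := hB.fPref_of_wRank_lt hx hy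
  have hxy_pref : Y.fPref (A x) x y :=
    hA.fPref_of_wRank_lt (hy ▸ Y.wRank_lt_of_not_lt hAy hcon) rfl
  exact Y.fPref_irrefl _ y (Y.fPref_trans _ y x y hyx_pref hxy_pref)

lemma StronglyStable.image_eq_image (hA : StronglyStable Y A) (hB : StronglyStable Y B) :
    A '' {w | Y.wRank w (A w) < Y.wRank w (B w)} =
      B '' {w | Y.wRank w (A w) < Y.wRank w (B w)} := by
  refine eq_of_subset_of_ncard_le ?_ ?_
  · rintro _ ⟨x, hx, rfl⟩
    obtain ⟨y, hy⟩ := hB.1.2 (A x)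
    exact ⟨y, hA.wRank_lt_of_apply_eq hB hx hy, hy⟩
  · rw [ncard_image_of_injective _ hA.1.1, ncard_image_of_injective _ hB.1.1]

lemma wRank_pJoin (w : Fin n) :
    Y.wRank w (pJoin Y A B w) = max (Y.wRank w (A w)) (Y.wRank w (B w)) := by
  unfold pJoin
  split_ifs with h
  · exact (max_eq_right h.le).symm
  · exact (max_eq_left (not_lt.1 h)).symm

lemma wRank_pMeet (w : Fin n) :
    Y.wRank w (pMeet Y A B w) = min (Y.wRank w (A w)) (Y.wRank w (B w)) := by
  unfold pMeet
  split_ifs with h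
  · exact (min_eq_left h.le).symm
  · exact (min_eq_right (not_lt.1 h)).symm

lemma pJoin_eq_or (w : Fin n) :
    pJoin Y A B w = A w ∧ Y.wRank w (B w) ≤ Y.wRank w (A w) ∨
      pJoin Y A B w = B w ∧ Y.wRank w (A w) ≤ Y.wRank w (B w) := by
  unfold pJoin
  split_ifs with h
  · exact .inr ⟨rfl, h.le⟩
  · exact .inl ⟨rfl, not_lt.1 h⟩

lemma pMeet_eq_or (w : Fin n) : pMeet Y A B w = A w ∨ pMeet Y A B w = B w := by
  unfold pMeet
  split_ifs
  · exact .inl rfl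
  · exact .inr rfl

theorem StronglyStable.bijective_pMeet (hA : StronglyStable Y A) (hB : StronglyStable Y B) :
    Bijective (pMeet Y A B) :=
  Finite.injective_iff_bijective.1 <| injective_piecewise_of_image_eq
    (s := {w | Y.wRank w (A w) < Y.wRank w (B w)}) hA.1.1 hB.1.1 (hA.image_eq_image hB)

theorem StronglyStable.bijective_pJoin (hA : StronglyStable Y A) (hB : StronglyStable Y B) :
    Bijective (pJoin Y A B) :=
  Finite.injective_iff_bijective.1 <| injective_piecewise_of_image_eq
    (s := {w | Y.wRank w (A w) < Y.wRank w (B w)}) hB.1.1 hA.1.1 (hA.image_eq_image hB).symm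

/-- If `w` prefers `f = B b` to `B w` while `f = A w'` with `w'` strictly preferring `B`, then `b`
also strictly prefers `B` (by `image_eq_image`), so `f` prefers `w'` to `b` and `b` to `w`. -/
lemma StronglyStable.fPref_of_pJoin_partner (hA : StronglyStable Y A) (hB : StronglyStable Y B)
    {w w' f : Fin n} (hw' : A w' = f) (hle : Y.wRank w' (B w') ≤ Y.wRank w' (A w'))
    (hw : Y.wRank w f < Y.wRank w (A w) ∨ Y.wRank w f < Y.wRank w (B w)) :
    Y.fPref f w' w := by
  rcases hw with hw | hw
  · exact hA.fPref_of_wRank_lt hw hw'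
  rcases hle.eq_or_lt with heq | hlt
  · exact hB.fPref_of_wRank_lt hw (Y.wRank_inj w' heq ▸ hw')
  obtain ⟨b, hb, hbf⟩ : f ∈ B '' {w | Y.wRank w (B w) < Y.wRank w (A w)} :=
    hB.image_eq_image hA ▸ hw' ▸ mem_image_of_mem A hlt
  have hbw : Y.fPref f b w := hB.fPref_of_wRank_lt hw hbf
  have hw'b : Y.fPref f w' b := hA.fPref_of_wRank_lt (hbf ▸ hb) hw'
  exact Y.fPref_trans f w' b w hw'b hbw

theorem StronglyStable.pMeet (hA : StronglyStable Y A) (hB : StronglyStable Y B) :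
    StronglyStable Y (pMeet Y A B) := by
  refine ⟨hA.bijective_pMeet hB, ?_⟩
  rintro w f ⟨-, hw, w', hw', hpref⟩
  rw [wRank_pMeet, lt_min_iff] at hw
  rcases pMeet_eq_or w' with h | h
  · exact hpref (hA.fPref_of_wRank_lt hw.1 (h.symm.trans hw'))
  · exact hpref (hB.fPref_of_wRank_lt hw.2 (h.symm.trans hw'))

theorem StronglyStable.pJoin (hA : StronglyStable Y A) (hB : StronglyStable Y B) :
    StronglyStable Y (pJoin Y A B) := by
  refine ⟨hA.bijective_pJoin hB, ?_⟩
  rintro w f ⟨-, hw, w', hw', hpref⟩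
  rw [wRank_pJoin, lt_max_iff] at hw
  rcases pJoin_eq_or w' with ⟨h, hle⟩ | ⟨h, hle⟩
  · exact hpref (hA.fPref_of_pJoin_partner hB (h.symm.trans hw') hle hw)
  · exact hpref (hB.fPref_of_pJoin_partner hA (h.symm.trans hw') hle hw.symm)

theorem stmt7_general {n : ℕ} (Y : PartialInstance n) (M₁ M₂ : Fin n → Fin n)
    (h₁ : StronglyStable Y M₁) (h₂ : StronglyStable Y M₂) :
    Function.Bijective (pJoin Y M₁ M₂) ∧ Function.Bijective (pMeet Y M₁ M₂) ∧
    StronglyStable Y (pJoin Y M₁ M₂) ∧ StronglyStable Y (pMeet Y M₁ M₂) :=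
  ⟨h₁.bijective_pJoin h₂, h₁.bijective_pMeet h₂, h₁.pJoin h₂, h₁.pMeet h₂⟩

/-- the join and meet of two strongly stable matchings of an instance with
one-sided partial order preferences are bijections and strongly stable; hence the
strongly stable matchings form a lattice. -/
theorem stmt7 {n : ℕ} (hn : 1 ≤ n) (Y : PartialInstance n) (M₁ M₂ : Fin n → Fin n)
    (h₁ : StronglyStable Y M₁) (h₂ : StronglyStable Y M₂) :
    Function.Bijective (pJoin Y M₁ M₂) ∧ Function.Bijective (pMeet Y M₁ M₂) ∧
    StronglyStable Y (pJoin Y M₁ M₂) ∧ StronglyStable Y (pMeet Y M₁ M₂) :=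
  stmt7_general Y M₁ M₂ h₁ h₂
end

section
/- There exist stable matching instances A and B on the same 4 workers and 4 firms, where B is obtained from A by changing the preference orders of exactly two workers and exactly two firms (all other agents have identical preference orders in A and B), together with matchings M₁ and M₂ stable under both A and B, such that M₁ ∨_A M₂ is not stable under B. Hence for instances that are (2,2), the set M_A ∩ M_B need not be a sublattice of the lattice of A-stable matchings. -/
namespace JoinCounterexample

def A : SMInstance 4 where
  wRank := ![![1,3,2,0], ![0,2,1,3], ![1,0,3,2], ![3,1,0,2]]
  fRank := ![![0,1,2,3], ![0,3,2,1], ![2,3,0,1], ![2,0,3,1]]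
  wRank_inj := by decide
  fRank_inj := by decide

def B : SMInstance 4 where
  wRank := ![![0,3,1,2], ![3,0,1,2], ![1,0,3,2], ![3,1,0,2]]
  fRank := ![![1,0,2,3], ![0,3,2,1], ![2,3,0,1], ![0,2,1,3]]
  wRank_inj := by decide
  fRank_inj := by decide

def M₁ : Fin 4 → Fin 4 := ![0,3,1,2]

def M₂ : Fin 4 → Fin 4 := ![3,0,2,1]

theorem isStable_A_M₁ : IsStable A M₁ := by decide

theorem isStable_B_M₁ : IsStable B M₁ := by decide

theorem isStable_A_M₂ : IsStable A M₂ := by decide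

theorem isStable_B_M₂ : IsStable B M₂ := by decide

theorem joinMap_A_M₁_M₂ : joinMap A M₁ M₂ = ![0,3,2,1] := by decide

theorem blocking_B_joinMap : Blocking B (joinMap A M₁ M₂) 2 3 := by
  rw [joinMap_A_M₁_M₂]; decide

end JoinCounterexample

/-- there are instances A and B on 4 workers and 4 firms, differing in the
preferences of exactly two workers and exactly two firms, and matchings M₁, M₂ stable
under both A and B whose A-join is not stable under B; so for (2,2) instances the
intersection need not be a sublattice of the lattice of A-stable matchings. -/
theorem stmt8 :
    ∃ (A B : SMInstance 4) (w₁ w₂ f₁ f₂ : Fin 4),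
      w₁ ≠ w₂ ∧ f₁ ≠ f₂ ∧
      A.wRank w₁ ≠ B.wRank w₁ ∧ A.wRank w₂ ≠ B.wRank w₂ ∧
      (∀ w, w ≠ w₁ → w ≠ w₂ → A.wRank w = B.wRank w) ∧
      A.fRank f₁ ≠ B.fRank f₁ ∧ A.fRank f₂ ≠ B.fRank f₂ ∧
      (∀ f, f ≠ f₁ → f ≠ f₂ → A.fRank f = B.fRank f) ∧
      ∃ M₁ M₂ : Fin 4 → Fin 4,
        (IsStable A M₁ ∧ IsStable B M₁) ∧ (IsStable A M₂ ∧ IsStable B M₂) ∧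
        ¬ IsStable B (joinMap A M₁ M₂) := by
  open JoinCounterexample in
  exact ⟨A, B, 0, 1, 0, 3, by decide, by decide, by decide, by decide, by decide,
    by decide, by decide, by decide, M₁, M₂, ⟨isStable_A_M₁, isStable_B_M₁⟩,
    ⟨isStable_A_M₂, isStable_B_M₂⟩, not_isStable_of_blocking blocking_B_joinMap⟩
end

section
/- There exist stable matching instances A and B on the same 6 workers and 6 firms, where B is obtained from A by changing the preference orders of exactly two workers and exactly two firms, together with matchings M₁ and M₂ stable under both A and B, such that all four matchings M₁ ∨_A M₂, M₁ ∧_A M₂, M₁ ∨_B M₂ and M₁ ∧_B M₂ are stable under both A and B, yet M₁ ∨_A M₂ ≠ M₁ ∨_B M₂ and M₁ ∧_A M₂ ≠ M₁ ∧_B M₂. Hence M_A ∩ M_B can be a sublattice of both lattices while the two induced partial orders on it differ. -/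
/-!
Take `M₁ = id` and `M₂ = swap 0 1`. Under `A`, `M₁` gives every worker its first choice and
`M₂` gives every firm its first choice; `B` swaps the ranks of firms `0, 1` for workers `0, 1`
and of workers `0, 1` for firms `0, 1`, which exchanges these roles. A matching giving one side
all its first choices is stable, so both matchings are stable under both instances. Every worker
weakly prefers `M₁` under `A` but `M₂` under `B`, so the `A`-join and `A`-meet are `M₂` and `M₁`,
while the `B`-join and `B`-meet are `M₁` and `M₂`.
-/

def WorkersPrefer {n : ℕ} (I : SMInstance n) (M₁ M₂ : Fin n → Fin n) : Prop :=
  ∀ w, I.wRank w (M₁ w) ≤ I.wRank w (M₂ w)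

section Lattice

variable {n : ℕ} {I : SMInstance n} {M₁ M₂ : Fin n → Fin n}

theorem joinMap_eq_right_of_workersPrefer (h : WorkersPrefer I M₁ M₂) :
    joinMap I M₁ M₂ = M₂ := by
  funext w
  unfold joinMap
  split_ifs with hlt
  · rfl
  · exact I.wRank_inj w (le_antisymm (h w) (not_lt.mp hlt))

theorem meetMap_eq_left_of_workersPrefer (h : WorkersPrefer I M₁ M₂) :
    meetMap I M₁ M₂ = M₁ := by
  funext w
  unfold meetMap
  split_ifs with hlt
  · rfl
  · exact (I.wRank_inj w (le_antisymm (h w) (not_lt.mp hlt))).symm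

theorem joinMap_eq_left_of_workersPrefer (h : WorkersPrefer I M₂ M₁) :
    joinMap I M₁ M₂ = M₁ := by
  funext w
  simp only [joinMap, if_neg (h w).not_gt]

theorem meetMap_eq_right_of_workersPrefer (h : WorkersPrefer I M₂ M₁) :
    meetMap I M₁ M₂ = M₂ := by
  funext w
  simp only [meetMap, if_neg (h w).not_gt]

end Lattice

section Stability

variable {n : ℕ} {I : SMInstance n} {M : Fin n → Fin n}

theorem isStable_of_forall_wRank_le (hM : Function.Bijective M)
    (h : ∀ w f, I.wRank w (M w) ≤ I.wRank w f) : IsStable I M :=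
  ⟨hM, fun w f ⟨_, hlt, _⟩ => (h w f).not_gt hlt⟩

theorem isStable_of_forall_fRank_le (hM : Function.Bijective M)
    (h : ∀ w w', I.fRank (M w) w ≤ I.fRank (M w) w') : IsStable I M :=
  ⟨hM, fun w _ ⟨_, _, w', hw', hlt⟩ => (h w' w).not_gt (hw' ▸ hlt)⟩

end Stability

def exampleA : SMInstance 6 where
  wRank := ![![0, 1, 2, 3, 4, 5], ![5, 0, 1, 2, 3, 4], ![4, 5, 0, 1, 2, 3],
    ![3, 4, 5, 0, 1, 2], ![2, 3, 4, 5, 0, 1], ![1, 2, 3, 4, 5, 0]]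
  fRank := ![![1, 0, 2, 3, 4, 5], ![0, 1, 2, 3, 4, 5], ![4, 5, 0, 1, 2, 3],
    ![3, 4, 5, 0, 1, 2], ![2, 3, 4, 5, 0, 1], ![1, 2, 3, 4, 5, 0]]
  wRank_inj := by decide
  fRank_inj := by decide

def exampleB : SMInstance 6 where
  wRank := ![![1, 0, 2, 3, 4, 5], ![0, 5, 1, 2, 3, 4], ![4, 5, 0, 1, 2, 3],
    ![3, 4, 5, 0, 1, 2], ![2, 3, 4, 5, 0, 1], ![1, 2, 3, 4, 5, 0]]
  fRank := ![![0, 1, 2, 3, 4, 5], ![1, 0, 2, 3, 4, 5], ![4, 5, 0, 1, 2, 3],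
    ![3, 4, 5, 0, 1, 2], ![2, 3, 4, 5, 0, 1], ![1, 2, 3, 4, 5, 0]]
  wRank_inj := by decide
  fRank_inj := by decide

theorem isStable_exampleA_id : IsStable exampleA id :=
  isStable_of_forall_wRank_le Function.bijective_id (by decide)

theorem isStable_exampleA_swap : IsStable exampleA (Equiv.swap 0 1) :=
  isStable_of_forall_fRank_le (Equiv.swap 0 1).bijective (by decide)

theorem isStable_exampleB_id : IsStable exampleB id :=
  isStable_of_forall_fRank_le Function.bijective_id (by decide)

theorem isStable_exampleB_swap : IsStable exampleB (Equiv.swap 0 1) :=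
  isStable_of_forall_wRank_le (Equiv.swap 0 1).bijective (by decide)

theorem workersPrefer_exampleA : WorkersPrefer exampleA id (Equiv.swap 0 1) := by
  unfold WorkersPrefer; decide

theorem workersPrefer_exampleB : WorkersPrefer exampleB (Equiv.swap 0 1) id := by
  unfold WorkersPrefer; decide

/-- there are instances A and B on 6 workers and 6 firms, differing in the
preferences of exactly two workers and exactly two firms, and matchings M₁, M₂ stable
under both, such that all four of the A-join, A-meet, B-join, B-meet are stable under
both A and B, yet the A-join differs from the B-join and the A-meet from the B-meet. -/
theorem stmt9 :
    ∃ (A B : SMInstance 6) (w₁ w₂ f₁ f₂ : Fin 6),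
      w₁ ≠ w₂ ∧ f₁ ≠ f₂ ∧
      A.wRank w₁ ≠ B.wRank w₁ ∧ A.wRank w₂ ≠ B.wRank w₂ ∧
      (∀ w, w ≠ w₁ → w ≠ w₂ → A.wRank w = B.wRank w) ∧
      A.fRank f₁ ≠ B.fRank f₁ ∧ A.fRank f₂ ≠ B.fRank f₂ ∧
      (∀ f, f ≠ f₁ → f ≠ f₂ → A.fRank f = B.fRank f) ∧
      ∃ M₁ M₂ : Fin 6 → Fin 6,
        (IsStable A M₁ ∧ IsStable B M₁) ∧ (IsStable A M₂ ∧ IsStable B M₂) ∧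
        (IsStable A (joinMap A M₁ M₂) ∧ IsStable B (joinMap A M₁ M₂)) ∧
        (IsStable A (meetMap A M₁ M₂) ∧ IsStable B (meetMap A M₁ M₂)) ∧
        (IsStable A (joinMap B M₁ M₂) ∧ IsStable B (joinMap B M₁ M₂)) ∧
        (IsStable A (meetMap B M₁ M₂) ∧ IsStable B (meetMap B M₁ M₂)) ∧
        joinMap A M₁ M₂ ≠ joinMap B M₁ M₂ ∧
        meetMap A M₁ M₂ ≠ meetMap B M₁ M₂ := by
  have hne : (id : Fin 6 → Fin 6) ≠ Equiv.swap 0 1 := fun h => by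
    simpa using congrFun h 0
  refine ⟨exampleA, exampleB, 0, 1, 0, 1, by decide, by decide, by decide, by decide, by decide,
    by decide, by decide, by decide, id, Equiv.swap 0 1, ?_⟩
  rw [joinMap_eq_right_of_workersPrefer workersPrefer_exampleA,
    meetMap_eq_left_of_workersPrefer workersPrefer_exampleA,
    joinMap_eq_left_of_workersPrefer workersPrefer_exampleB,
    meetMap_eq_right_of_workersPrefer workersPrefer_exampleB]
  have hid := And.intro isStable_exampleA_id isStable_exampleB_id
  have hswap := And.intro isStable_exampleA_swap isStable_exampleB_swap
  exact ⟨hid, hswap, hswap, hid, hid, hswap, hne.symm, hne⟩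
end

section
/- Let A and B be stable matching instances on the same n workers and n firms such that all workers except possibly one worker w₁ have identical preference orders in A and B. If the set M_A ∩ M_B of matchings stable under both A and B is nonempty, then it contains a firm-optimal matching M⊥: a matching M⊥ ∈ M_A ∩ M_B such that for every M ∈ M_A ∩ M_B and every firm f, f weakly prefers M⊥⁻¹(f) to M⁻¹(f) under its preference order in A and also under its preference order in B. -/
/-!
The worker-pessimal (equivalently firm-optimal) matching is obtained from the lattice structure
of stable matchings. For two matchings stable under `I`, the join (every worker takes its worse
partner) gives each firm the partner it prefers among its two partners, so the join is again a
bijection and is stable. Since `A` and `B` differ only at `w₁`, their joins of two matchings stable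
under both are bijections agreeing off `w₁`, hence equal, so the matchings stable under both are
closed under the join. A common stable matching maximising the total worker rank is then
worker-pessimal among them, and stability turns this into firm-optimality.
-/

theorem eq_of_surjective_of_injective_of_forall_ne {α β : Type*} {f g : α → β}
    (hf : Function.Surjective f) (hg : Function.Injective g) (a : α)
    (h : ∀ x, x ≠ a → f x = g x) : f = g := by
  funext x
  by_cases hx : x = a
  · subst hx
    obtain ⟨y, hy⟩ := hf (g x)
    by_cases hyx : y = x
    · rwa [hyx] at hy
    · exact absurd (hg ((h y hyx).symm.trans hy)) hyx
  · exact h x hx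

variable {n : ℕ} {I : SMInstance n} {M M₁ M₂ : Fin n → Fin n} {w w' f : Fin n}

theorem IsStable.fRank_le_of_wRank_le (hM : IsStable I M) (hw : M w = f)
    (hw' : I.wRank w' f ≤ I.wRank w' (M w')) : I.fRank f w ≤ I.fRank f w' := by
  by_cases hww' : w = w'
  · rw [hww']
  have hne : M w' ≠ f := fun h => hww' (hM.1.1 (hw.trans h.symm))
  have hlt : I.wRank w' f < I.wRank w' (M w') :=
    hw'.lt_of_ne fun h => hne (I.wRank_inj w' h).symm
  exact not_lt.1 fun hf => hM.2 w' f ⟨hne, hlt, w, hw, hf⟩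

section joinMap

variable (I M₁ M₂ w)

theorem joinMap_comm : joinMap I M₁ M₂ = joinMap I M₂ M₁ := by
  funext w
  unfold joinMap
  split_ifs with h₁ h₂ h₂
  · exact absurd h₁ h₂.not_gt
  · rfl
  · rfl
  · exact I.wRank_inj w (le_antisymm (not_lt.1 h₂) (not_lt.1 h₁))

theorem joinMap_eq_or : joinMap I M₁ M₂ w = M₁ w ∨ joinMap I M₁ M₂ w = M₂ w := by
  unfold joinMap
  split_ifs
  exacts [Or.inr rfl, Or.inl rfl]

theorem wRank_le_joinMap_left : I.wRank w (M₁ w) ≤ I.wRank w (joinMap I M₁ M₂ w) := by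
  unfold joinMap
  split_ifs with h
  exacts [h.le, le_rfl]

theorem wRank_le_joinMap_right : I.wRank w (M₂ w) ≤ I.wRank w (joinMap I M₁ M₂ w) :=
  joinMap_comm I M₁ M₂ ▸ wRank_le_joinMap_left I M₂ M₁ w

theorem joinMap_eq_left_iff :
    joinMap I M₁ M₂ = M₁ ↔ ∀ w, I.wRank w (M₂ w) ≤ I.wRank w (M₁ w) := by
  refine ⟨fun h w => h ▸ wRank_le_joinMap_right I M₁ M₂ w, fun h => ?_⟩
  funext w
  rw [joinMap, if_neg (h w).not_gt]

end joinMap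

theorem joinMap_apply_eq_of_fRank_le (h₂ : IsStable I M₂) (hw : M₁ w = f) (hw' : M₂ w' = f)
    (hf : I.fRank f w ≤ I.fRank f w') : joinMap I M₁ M₂ w = f := by
  unfold joinMap
  split_ifs with h
  · have hf' : I.fRank f w' ≤ I.fRank f w :=
      h₂.fRank_le_of_wRank_le hw' (hw ▸ h.le)
    rwa [I.fRank_inj f (le_antisymm hf hf')]
  · exact hw

theorem joinMap_bijective (h₁ : IsStable I M₁) (h₂ : IsStable I M₂) :
    Function.Bijective (joinMap I M₁ M₂) := by
  refine Finite.surjective_iff_bijective.1 fun f => ?_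
  obtain ⟨u₁, hu₁⟩ := h₁.1.2 f
  obtain ⟨u₂, hu₂⟩ := h₂.1.2 f
  rcases le_total (I.fRank f u₁) (I.fRank f u₂) with h | h
  · exact ⟨u₁, joinMap_apply_eq_of_fRank_le h₂ hu₁ hu₂ h⟩
  · exact ⟨u₂, joinMap_comm I M₁ M₂ ▸ joinMap_apply_eq_of_fRank_le h₁ hu₂ hu₁ h⟩

theorem fRank_le_of_joinMap_apply_eq (h₁ : IsStable I M₁) (h₂ : IsStable I M₂)
    (hJ : joinMap I M₁ M₂ w = f) (hw' : M₁ w' = f) : I.fRank f w ≤ I.fRank f w' := by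
  obtain ⟨u, hu⟩ := h₂.1.2 f
  have hinj := (joinMap_bijective h₁ h₂).1
  rcases le_total (I.fRank f w') (I.fRank f u) with h | h
  · rw [hinj (hJ.trans (joinMap_apply_eq_of_fRank_le h₂ hw' hu h).symm)]
  · have hJu : joinMap I M₁ M₂ u = f :=
      joinMap_comm I M₁ M₂ ▸ joinMap_apply_eq_of_fRank_le h₁ hu hw' h
    rwa [hinj (hJ.trans hJu.symm)]

theorem Blocking.of_joinMap (h₁ : IsStable I M₁) (h₂ : IsStable I M₂)
    (hb : Blocking I (joinMap I M₁ M₂) w f) (hw : joinMap I M₁ M₂ w = M₁ w) :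
    Blocking I M₁ w f := by
  obtain ⟨hne, hlt, w'', hw'', hf⟩ := hb
  obtain ⟨u, hu⟩ := h₁.1.2 f
  exact ⟨hw ▸ hne, hw ▸ hlt, u, hu, hf.trans_le (fRank_le_of_joinMap_apply_eq h₁ h₂ hw'' hu)⟩

theorem joinMap_isStable (h₁ : IsStable I M₁) (h₂ : IsStable I M₂) :
    IsStable I (joinMap I M₁ M₂) := by
  refine ⟨joinMap_bijective h₁ h₂, fun w f hb => ?_⟩
  rcases joinMap_eq_or I M₁ M₂ w with h | h
  · exact h₁.2 w f (hb.of_joinMap h₁ h₂ h)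
  · rw [joinMap_comm] at hb h
    exact h₂.2 w f (hb.of_joinMap h₂ h₁ h)

theorem joinMap_eq_of_wRank_eq_of_ne {A B : SMInstance n} {w₁ : Fin n}
    (hW : ∀ w, w ≠ w₁ → A.wRank w = B.wRank w) (hA₁ : IsStable A M₁) (hA₂ : IsStable A M₂)
    (hB₁ : IsStable B M₁) (hB₂ : IsStable B M₂) : joinMap A M₁ M₂ = joinMap B M₁ M₂ :=
  eq_of_surjective_of_injective_of_forall_ne (joinMap_bijective hA₁ hA₂).2
    (joinMap_bijective hB₁ hB₂).1 w₁ fun w hw => by simp only [joinMap, hW w hw]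

theorem joinMap_isStable_of_wRank_eq_of_ne {A B : SMInstance n} {w₁ : Fin n}
    (hW : ∀ w, w ≠ w₁ → A.wRank w = B.wRank w) (h₁ : IsStable A M₁ ∧ IsStable B M₁)
    (h₂ : IsStable A M₂ ∧ IsStable B M₂) :
    IsStable A (joinMap A M₁ M₂) ∧ IsStable B (joinMap A M₁ M₂) :=
  ⟨joinMap_isStable h₁.1 h₂.1,
    joinMap_eq_of_wRank_eq_of_ne hW h₁.1 h₂.1 h₁.2 h₂.2 ▸ joinMap_isStable h₁.2 h₂.2⟩

theorem exists_forall_wRank_le_of_joinMap_mem (I : SMInstance n) {S : Set (Fin n → Fin n)}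
    (hS : S.Nonempty) (hjoin : ∀ M₁ ∈ S, ∀ M₂ ∈ S, joinMap I M₁ M₂ ∈ S) :
    ∃ Mb ∈ S, ∀ M ∈ S, ∀ w, I.wRank w (M w) ≤ I.wRank w (Mb w) := by
  obtain ⟨Mb, hMb, hmax⟩ :=
    S.exists_max_image (fun M => ∑ w, (I.wRank w (M w) : ℕ)) S.toFinite hS
  refine ⟨Mb, hMb, fun M hM w => ?_⟩
  -- A join never lowers a worker's rank, so it cannot change a maximiser of the total rank.
  have hle : ∀ w ∈ Finset.univ, (I.wRank w (Mb w) : ℕ) ≤ I.wRank w (joinMap I Mb M w) :=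
    fun w _ => wRank_le_joinMap_left I Mb M w
  have heq := (Finset.sum_eq_sum_iff_of_le hle).1
    ((Finset.sum_le_sum hle).antisymm (hmax _ (hjoin Mb hMb M hM)))
  calc I.wRank w (M w) ≤ I.wRank w (joinMap I Mb M w) := wRank_le_joinMap_right I Mb M w
    _ = I.wRank w (Mb w) := (Fin.val_injective (heq w (Finset.mem_univ w))).symm

theorem stmt12_general {n : ℕ} (A B : SMInstance n) (w₁ : Fin n)
    (hW : ∀ w, w ≠ w₁ → A.wRank w = B.wRank w)
    (hne : ∃ M, IsStable A M ∧ IsStable B M) :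
    ∃ Mbot, (IsStable A Mbot ∧ IsStable B Mbot) ∧
      ∀ M, (IsStable A M ∧ IsStable B M) →
        ∀ f w w', Mbot w = f → M w' = f →
          A.fRank f w ≤ A.fRank f w' ∧ B.fRank f w ≤ B.fRank f w' := by
  obtain ⟨Mb, hMb, hA⟩ := exists_forall_wRank_le_of_joinMap_mem A hne
    fun M₁ h₁ M₂ h₂ => joinMap_isStable_of_wRank_eq_of_ne hW h₁ h₂
  have hB : ∀ M, IsStable A M ∧ IsStable B M → ∀ w, B.wRank w (M w) ≤ B.wRank w (Mb w) := by
    intro M hM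
    rw [← joinMap_eq_left_iff, ← joinMap_eq_of_wRank_eq_of_ne hW hMb.1 hM.1 hMb.2 hM.2,
      joinMap_eq_left_iff]
    exact hA M hM
  refine ⟨Mb, hMb, fun M hM f w w' hw hw' => ⟨?_, ?_⟩⟩
  · exact hMb.1.fRank_le_of_wRank_le hw (hw' ▸ hA M hM w')
  · exact hMb.2.fRank_le_of_wRank_le hw (hw' ▸ hB M hM w')

/-- if A and B are (1,n) and some matching is stable under both, then
there is a firm-optimal matching stable under both: every firm weakly prefers its
partner there, under its preference order in A and also in B. -/
theorem stmt12 {n : ℕ} (hn : 1 ≤ n) (A B : SMInstance n) (w₁ : Fin n)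
    (hW : ∀ w, w ≠ w₁ → A.wRank w = B.wRank w)
    (hne : ∃ M, IsStable A M ∧ IsStable B M) :
    ∃ Mbot, (IsStable A Mbot ∧ IsStable B Mbot) ∧
      ∀ M, (IsStable A M ∧ IsStable B M) →
        ∀ f w w', Mbot w = f → M w' = f →
          A.fRank f w ≤ A.fRank f w' ∧ B.fRank f w ≤ B.fRank f w' :=
  stmt12_general A B w₁ hW hne
end

section
/- There exist stable matching instances A and B on the same 5 workers and 5 firms, where B is obtained from A by changing the preference orders of exactly one worker and exactly one firm (all other agents have identical preference orders in A and B), together with matchings M₁, M₂, M₃, M₄ each stable under A but not stable under B, such that M₁ ∨_A M₂ is stable under both A and B and M₃ ∧_A M₄ is stable under both A and B. Hence even for instances that are (1,1), the set M_A \ M_B need not be a join semi-sublattice nor a meet semi-sublattice of the lattice of A-stable matchings. -/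
instance inst_s14 {n : ℕ} (I : SMInstance n) (M : Fin n → Fin n) (w f : Fin n) :
    Decidable (Blocking I M w f) :=
  inferInstanceAs (Decidable (_ ∧ _ ∧ _))

instance inst_s14_2 {n : ℕ} (I : SMInstance n) (M : Fin n → Fin n) : Decidable (IsStable I M) :=
  inferInstanceAs (Decidable (_ ∧ _))

/-!
The `A`-stable matchings are `id`, `![0,1,4,3,2]`, `M₁`, `M₂` and `![3,4,0,2,1]`. Changing the
preferences of worker `0` and firm `0` destroys the two incomparable ones, `M₁` and `M₂`, while
their meet `id` (the worker-optimal matching) and their join `![3,4,0,2,1]` (the worker-pessimal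
one) stay stable; so the single pair `M₁, M₂` serves for both the join and the meet.
-/

namespace OneOneCounterexample

/- Row `w` of a table lists the rank (`0` = most preferred) that agent `w` gives to each
agent of the other side. -/
def A : SMInstance 5 where
  wRank := ![![0,3,2,1,4], ![1,0,4,3,2], ![2,4,1,3,0], ![3,4,1,0,2], ![2,4,0,1,3]]
  fRank := ![![1,2,0,4,3], ![0,3,4,2,1], ![4,2,1,0,3], ![0,4,3,1,2], ![1,0,3,4,2]]
  wRank_inj := by decide
  fRank_inj := by decide

def B : SMInstance 5 where
  wRank := ![![0,4,1,3,2], ![1,0,4,3,2], ![2,4,1,3,0], ![3,4,1,0,2], ![2,4,0,1,3]]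
  fRank := ![![2,1,0,3,4], ![0,3,4,2,1], ![4,2,1,0,3], ![0,4,3,1,2], ![1,0,3,4,2]]
  wRank_inj := by decide
  fRank_inj := by decide

def M₁ : Fin 5 → Fin 5 := ![0,4,2,3,1]

def M₂ : Fin 5 → Fin 5 := ![3,1,0,2,4]

theorem wRank_zero_ne : A.wRank 0 ≠ B.wRank 0 := by decide

theorem wRank_eq_of_ne_zero : ∀ w, w ≠ 0 → A.wRank w = B.wRank w := by decide

theorem fRank_zero_ne : A.fRank 0 ≠ B.fRank 0 := by decide

theorem fRank_eq_of_ne_zero : ∀ f, f ≠ 0 → A.fRank f = B.fRank f := by decide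

theorem isStable_A_M₁ : IsStable A M₁ := by decide

theorem isStable_A_M₂ : IsStable A M₂ := by decide

theorem blocking_B_M₁ : Blocking B M₁ 1 0 := by decide

theorem blocking_B_M₂ : Blocking B M₂ 0 4 := by decide

theorem joinMap_A_M₁_M₂ : joinMap A M₁ M₂ = ![3,4,0,2,1] := by decide

theorem meetMap_A_M₁_M₂ : meetMap A M₁ M₂ = id := by decide

theorem isStable_A_join : IsStable A ![3,4,0,2,1] := by decide

theorem isStable_B_join : IsStable B ![3,4,0,2,1] := by decide

theorem isStable_A_id : IsStable A id := by decide

theorem isStable_B_id : IsStable B id := by decide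

end OneOneCounterexample

/-- there are instances A and B on 5 workers and 5 firms, differing in the
preferences of exactly one worker and exactly one firm, and matchings M₁, M₂, M₃, M₄
stable under A but not under B, whose A-join (resp. A-meet) is stable under both A and
B; so even for (1,1) instances the difference set need not be a join semi-sublattice
nor a meet semi-sublattice of the lattice of A-stable matchings. -/
theorem stmt14 :
    ∃ (A B : SMInstance 5) (w₁ f₁ : Fin 5),
      A.wRank w₁ ≠ B.wRank w₁ ∧ (∀ w, w ≠ w₁ → A.wRank w = B.wRank w) ∧
      A.fRank f₁ ≠ B.fRank f₁ ∧ (∀ f, f ≠ f₁ → A.fRank f = B.fRank f) ∧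
      ∃ M₁ M₂ M₃ M₄ : Fin 5 → Fin 5,
        (IsStable A M₁ ∧ ¬ IsStable B M₁) ∧
        (IsStable A M₂ ∧ ¬ IsStable B M₂) ∧
        (IsStable A M₃ ∧ ¬ IsStable B M₃) ∧
        (IsStable A M₄ ∧ ¬ IsStable B M₄) ∧
        (IsStable A (joinMap A M₁ M₂) ∧ IsStable B (joinMap A M₁ M₂)) ∧
        (IsStable A (meetMap A M₃ M₄) ∧ IsStable B (meetMap A M₃ M₄)) := by
  open OneOneCounterexample in
  have hM₁ : IsStable A M₁ ∧ ¬ IsStable B M₁ :=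
    ⟨isStable_A_M₁, not_isStable_of_blocking blocking_B_M₁⟩
  have hM₂ : IsStable A M₂ ∧ ¬ IsStable B M₂ :=
    ⟨isStable_A_M₂, not_isStable_of_blocking blocking_B_M₂⟩
  refine ⟨A, B, 0, 0, wRank_zero_ne, wRank_eq_of_ne_zero, fRank_zero_ne, fRank_eq_of_ne_zero,
    M₁, M₂, M₁, M₂, hM₁, hM₂, hM₁, hM₂, ?_, ?_⟩
  · rw [joinMap_A_M₁_M₂]
    exact ⟨isStable_A_join, isStable_B_join⟩
  · rw [meetMap_A_M₁_M₂]
    exact ⟨isStable_A_id, isStable_B_id⟩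
end

section
/- Let A and B be stable matching instances on the same n workers and n firms such that all workers except possibly one worker w₁ have identical preference orders in A and B. Then the polytope P_A ∩ P_B ⊆ ℝ^{W×F} (the points satisfying the fractional stable matching constraints of both A and B) equals the convex hull of the indicator vectors of the matchings that are stable under both A and B. In particular, every extreme point of P_A ∩ P_B is integral, and P_A ∩ P_B is nonempty if and only if some matching is stable under both A and B. -/
open Finset in
/-- Membership in the fractional stable matching polytope P_I. -/
def InPolytope {n : ℕ} (I : SMInstance n) (x : Fin n → Fin n → ℝ) : Prop :=
  (∀ w f, 0 ≤ x w f) ∧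
  (∀ w, ∑ f, x w f = 1) ∧
  (∀ f, ∑ w, x w f = 1) ∧
  (∀ w f, ∑ f' ∈ univ.filter (fun f' => I.wRank w f < I.wRank w f'), x w f' ≤
          ∑ w' ∈ univ.filter (fun w' => I.fRank f w' < I.fRank f w), x w' f)

/-- The 0/1 indicator vector of a matching M. -/
def indicVec {n : ℕ} (M : Fin n → Fin n) : Fin n → Fin n → ℝ :=
  fun w f => if M w = f then 1 else 0

/-!
Every point `x` of `P_I` satisfies the stability constraint of each pair in its support with
equality: the slacks, weighted by `x`, sum to zero by a double-counting identity. Consequently the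
map sending each worker to its least preferred firm in the support of its row is a stable matching
`M`, and subtracting `t • indicVec M`, with `t` the smallest of the entries `x w (M w)`, and
rescaling stays in `P_I` and shrinks the support. Workers other than `w₁` rank firms alike in `A`
and `B`, so the `A`- and `B`-worst maps of `x` agree off `w₁`; being bijections they agree
everywhere. The same matching is thus peeled off in both polytopes, and induction on the support
writes `x` as a convex combination of matchings stable under both instances.
-/

open Finset Function

section PairSums

variable {ι β R : Type*} [Fintype ι] [LinearOrder β] (r : ι → β)

theorem sum_mul_sum_filter_lt_add_sum_mul_sum_filter_le [CommSemiring R] (a : ι → R) :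
    ∑ i, a i * ∑ j ∈ univ.filter (fun j => r j < r i), a j +
      ∑ i, a i * ∑ j ∈ univ.filter (fun j => r j ≤ r i), a j = (∑ i, a i) ^ 2 := by
  have hswap : ∑ i, a i * ∑ j ∈ univ.filter (fun j => r j ≤ r i), a j =
      ∑ i, a i * ∑ j ∈ univ.filter (fun j => ¬ r j < r i), a j := by
    simp only [mul_sum, sum_filter, not_lt]
    rw [sum_comm]
    exact sum_congr rfl fun i _ => sum_congr rfl fun j _ => by split_ifs <;> ring
  rw [hswap, ← sum_add_distrib, sq, sum_mul]
  exact sum_congr rfl fun i _ => by rw [← mul_add, sum_filter_add_sum_filter_not, mul_sum]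

variable {r}

theorem sum_filter_le_eq_add_sum_filter_lt [AddCommMonoid R] (hr : Injective r) (a : ι → R)
    (i : ι) :
    ∑ j ∈ univ.filter (fun j => r j ≤ r i), a j =
      a i + ∑ j ∈ univ.filter (fun j => r j < r i), a j := by
  classical
  have : univ.filter (fun j => r j ≤ r i) = insert i (univ.filter (fun j => r j < r i)) := by
    ext j
    simp only [mem_filter, mem_univ, true_and, mem_insert, le_iff_lt_or_eq, hr.eq_iff]
    tauto
  rw [this, sum_insert (by simp)]

theorem two_mul_sum_mul_sum_filter_lt [CommRing R] (hr : Injective r) (a : ι → R) :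
    2 * ∑ i, a i * ∑ j ∈ univ.filter (fun j => r j < r i), a j =
      (∑ i, a i) ^ 2 - ∑ i, a i ^ 2 := by
  rw [← sum_mul_sum_filter_lt_add_sum_mul_sum_filter_le r a]
  simp only [sum_filter_le_eq_add_sum_filter_lt hr, mul_add, sum_add_distrib, sq]
  ring

theorem two_mul_sum_mul_sum_filter_le [CommRing R] (hr : Injective r) (a : ι → R) :
    2 * ∑ i, a i * ∑ j ∈ univ.filter (fun j => r j ≤ r i), a j =
      (∑ i, a i) ^ 2 + ∑ i, a i ^ 2 := by
  rw [← sum_mul_sum_filter_lt_add_sum_mul_sum_filter_le r a]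
  simp only [sum_filter_le_eq_add_sum_filter_lt hr, mul_add, sum_add_distrib, sq]
  ring

end PairSums

theorem Function.Surjective.eq_of_injective_of_eqOn_compl_singleton {α β : Type*}
    {f g : α → β} (hf : Surjective f) (hg : Injective g) {a : α} (h : Set.EqOn f g {a}ᶜ) :
    f = g := by
  funext b
  by_cases hb : b = a
  · subst hb
    obtain ⟨c, hc⟩ := hf (g b)
    by_cases hcb : c = b
    · subst hcb; exact hc
    · exact absurd (hg ((h hcb).symm.trans hc)) hcb
  · exact h hb

variable {n : ℕ}

section IndicVec

variable (M : Fin n → Fin n)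

theorem indicVec_nonneg (w f : Fin n) : 0 ≤ indicVec M w f := by
  unfold indicVec
  split_ifs <;> norm_num

theorem sum_indicVec_row (w : Fin n) (s : Finset (Fin n)) :
    ∑ f ∈ s, indicVec M w f = if M w ∈ s then 1 else 0 :=
  sum_ite_eq s (M w) fun _ => 1

variable {M}

theorem sum_indicVec_col (hM : Injective M) {w₀ f : Fin n} (h : M w₀ = f)
    (s : Finset (Fin n)) : ∑ w ∈ s, indicVec M w f = if w₀ ∈ s then 1 else 0 := by
  simp only [indicVec, ← h, hM.eq_iff]
  exact sum_ite_eq' s w₀ fun _ => 1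

theorem IsStable.inPolytope_indicVec {I : SMInstance n} (hM : IsStable I M) :
    InPolytope I (indicVec M) := by
  obtain ⟨hbij, hnb⟩ := hM
  refine ⟨indicVec_nonneg M, fun w => by simp [sum_indicVec_row], fun f => ?_, fun w f => ?_⟩
  · obtain ⟨w₀, h⟩ := hbij.2 f
    simp [sum_indicVec_col hbij.1 h]
  · obtain ⟨w₀, h⟩ := hbij.2 f
    rw [sum_indicVec_row, sum_indicVec_col hbij.1 h]
    by_cases hworse : I.wRank w f < I.wRank w (M w)
    · have hne : M w ≠ f := fun e => (e ▸ hworse).false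
      have hw₀ : w₀ ≠ w := fun e => hne (e ▸ h)
      have hrival : I.fRank f w₀ < I.fRank f w :=
        (not_lt.1 fun hlt => hnb w f ⟨hne, hworse, w₀, h, hlt⟩).lt_of_ne
          fun e => hw₀ (I.fRank_inj f e)
      simp [hworse, hrival]
    · simp only [mem_filter, mem_univ, true_and, hworse, if_false]
      split_ifs <;> norm_num

end IndicVec

theorem convex_inPolytope (I : SMInstance n) : Convex ℝ {x | InPolytope I x} := by
  rintro x ⟨hnn, hrow, hcol, hstab⟩ y ⟨hnn', hrow', hcol', hstab'⟩ a b ha hb hab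
  show InPolytope I _
  simp only [InPolytope, Pi.add_apply, Pi.smul_apply, smul_eq_mul,
    sum_add_distrib, ← mul_sum, hrow, hrow', hcol, hcol', mul_one, hab]
  refine ⟨fun w f => add_nonneg (mul_nonneg ha (hnn w f)) (mul_nonneg hb (hnn' w f)),
    fun _ => trivial, fun _ => trivial, fun w f => ?_⟩
  exact add_le_add (mul_le_mul_of_nonneg_left (hstab w f) ha)
    (mul_le_mul_of_nonneg_left (hstab' w f) hb)

section Polytope

variable {I : SMInstance n} {x : Fin n → Fin n → ℝ}

def weakPrefMass (I : SMInstance n) (x : Fin n → Fin n → ℝ) (w f : Fin n) : ℝ :=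
  ∑ f' ∈ univ.filter (fun f' => I.wRank w f' ≤ I.wRank w f), x w f'

def rivalMass (I : SMInstance n) (x : Fin n → Fin n → ℝ) (w f : Fin n) : ℝ :=
  ∑ w' ∈ univ.filter (fun w' => I.fRank f w' < I.fRank f w), x w' f

namespace InPolytope

theorem one_le_weakPrefMass_add_rivalMass (hx : InPolytope I x) (w f : Fin n) :
    1 ≤ weakPrefMass I x w f + rivalMass I x w f := by
  have hsplit := sum_filter_add_sum_filter_not univ
    (fun f' => I.wRank w f' ≤ I.wRank w f) (x w)
  simp only [not_le, hx.2.1 w] at hsplit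
  have := hx.2.2.2 w f
  unfold weakPrefMass rivalMass
  linarith

theorem sum_sum_mul_weakPrefMass_add_rivalMass_sub_one (hx : InPolytope I x) :
    ∑ w, ∑ f, x w f * (weakPrefMass I x w f + rivalMass I x w f - 1) = 0 := by
  have hrow : ∀ w, 2 * ∑ f, x w f * weakPrefMass I x w f = 1 + ∑ f, x w f ^ 2 := fun w => by
    simp only [weakPrefMass]
    rw [two_mul_sum_mul_sum_filter_le (I.wRank_inj w), hx.2.1 w, one_pow]
  have hcol : ∀ f, 2 * ∑ w, x w f * rivalMass I x w f = 1 - ∑ w, x w f ^ 2 := fun f => by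
    simp only [rivalMass]
    rw [two_mul_sum_mul_sum_filter_lt (I.fRank_inj f) (fun w => x w f), hx.2.2.1 f, one_pow]
  have hW : 2 * ∑ w, ∑ f, x w f * weakPrefMass I x w f =
      ∑ _w : Fin n, (1 : ℝ) + ∑ w, ∑ f, x w f ^ 2 := by
    rw [mul_sum, sum_congr rfl fun w _ => hrow w, sum_add_distrib]
  have hR : 2 * ∑ w, ∑ f, x w f * rivalMass I x w f =
      ∑ _f : Fin n, (1 : ℝ) - ∑ f, ∑ w, x w f ^ 2 := by
    rw [sum_comm, mul_sum, sum_congr rfl fun f _ => hcol f, sum_sub_distrib]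
  have hsq : ∑ w, ∑ f, x w f ^ 2 = ∑ f, ∑ w, x w f ^ 2 := sum_comm
  have hmass : ∑ w, ∑ f, x w f = ∑ _w : Fin n, (1 : ℝ) := sum_congr rfl fun w _ => hx.2.1 w
  simp only [mul_sub, mul_add, mul_one, sum_sub_distrib, sum_add_distrib]
  linarith

theorem weakPrefMass_add_rivalMass_eq_one (hx : InPolytope I x) {w f : Fin n}
    (hwf : x w f ≠ 0) : weakPrefMass I x w f + rivalMass I x w f = 1 := by
  have hslack : ∀ w f, 0 ≤ x w f * (weakPrefMass I x w f + rivalMass I x w f - 1) :=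
    fun w f => mul_nonneg (hx.1 w f) (by linarith [hx.one_le_weakPrefMass_add_rivalMass w f])
  have hrow := (sum_eq_zero_iff_of_nonneg fun w _ => sum_nonneg fun f _ => hslack w f).1
    hx.sum_sum_mul_weakPrefMass_add_rivalMass_sub_one w (mem_univ w)
  have hentry := (sum_eq_zero_iff_of_nonneg fun f _ => hslack w f).1 hrow f (mem_univ f)
  linarith [(mul_eq_zero.1 hentry).resolve_left hwf]

theorem eq_indicVec_of_one_le (hx : InPolytope I x) {M : Fin n → Fin n}
    (h : ∀ w, 1 ≤ x w (M w)) : x = indicVec M := by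
  funext w f
  have hrest := add_sum_erase univ (x w) (mem_univ (M w))
  rw [hx.2.1 w] at hrest
  have hrest0 : ∑ f' ∈ univ.erase (M w), x w f' = 0 :=
    le_antisymm (by linarith [h w]) (sum_nonneg fun f' _ => hx.1 w f')
  unfold indicVec
  split_ifs with hf
  · subst hf; linarith
  · exact (sum_eq_zero_iff_of_nonneg fun f' _ => hx.1 w f').1 hrest0 f
      (mem_erase.2 ⟨Ne.symm hf, mem_univ f⟩)

end InPolytope

def IsWorstMap (I : SMInstance n) (x : Fin n → Fin n → ℝ) (M : Fin n → Fin n) : Prop :=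
  ∀ w, x w (M w) ≠ 0 ∧ ∀ f, x w f ≠ 0 → I.wRank w f ≤ I.wRank w (M w)

theorem InPolytope.exists_isWorstMap (hx : InPolytope I x) : ∃ M, IsWorstMap I x M := by
  have hsupp : ∀ w, (univ.filter fun f => x w f ≠ 0).Nonempty := fun w => by
    obtain ⟨f, -, hf⟩ := exists_ne_zero_of_sum_ne_zero (s := univ) (f := x w)
      (by rw [hx.2.1 w]; exact one_ne_zero)
    exact ⟨f, mem_filter.2 ⟨mem_univ f, hf⟩⟩
  choose M hM hmax using fun w => exists_max_image _ (I.wRank w) (hsupp w)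
  exact ⟨M, fun w => ⟨(mem_filter.1 (hM w)).2,
    fun f hf => hmax w f (mem_filter.2 ⟨mem_univ f, hf⟩)⟩⟩

namespace IsWorstMap

variable {M : Fin n → Fin n}

theorem weakPrefMass_eq_one (hx : InPolytope I x) (hM : IsWorstMap I x M) (w : Fin n) :
    weakPrefMass I x w (M w) = 1 := by
  rw [weakPrefMass, ← hx.2.1 w]
  refine sum_subset (filter_subset _ _) fun f _ hf => ?_
  by_contra hne
  exact hf (mem_filter.2 ⟨mem_univ f, (hM w).2 f hne⟩)

theorem eq_zero_of_fRank_lt (hx : InPolytope I x) (hM : IsWorstMap I x M) {w w' : Fin n}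
    (h : I.fRank (M w) w' < I.fRank (M w) w) : x w' (M w) = 0 := by
  have hrival : rivalMass I x w (M w) = 0 := by
    linarith [hx.weakPrefMass_add_rivalMass_eq_one (hM w).1, hM.weakPrefMass_eq_one hx w]
  exact (sum_eq_zero_iff_of_nonneg fun w'' _ => hx.1 w'' (M w)).1 hrival w'
    (mem_filter.2 ⟨mem_univ w', h⟩)

theorem injective (hx : InPolytope I x) (hM : IsWorstMap I x M) : Injective M := by
  intro w w' he
  by_contra hne
  rcases lt_or_gt_of_ne fun e => hne (I.fRank_inj (M w) e) with h | h
  · exact (hM w).1 (he ▸ hM.eq_zero_of_fRank_lt hx (he ▸ h))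
  · exact (hM w').1 (he ▸ hM.eq_zero_of_fRank_lt hx h)

theorem bijective (hx : InPolytope I x) (hM : IsWorstMap I x M) : Bijective M :=
  Finite.injective_iff_bijective.1 (hM.injective hx)

theorem isStable (hx : InPolytope I x) (hM : IsWorstMap I x M) : IsStable I M := by
  refine ⟨hM.bijective hx, ?_⟩
  rintro w f ⟨-, hpref, w', rfl, hrank⟩
  have hworse : x w (M w) ≤
      ∑ f' ∈ univ.filter (fun f' => I.wRank w (M w') < I.wRank w f'), x w f' :=
    single_le_sum (fun f' _ => hx.1 w f') (mem_filter.2 ⟨mem_univ _, hpref⟩)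
  have hrival : ∑ w'' ∈ univ.filter (fun w'' => I.fRank (M w') w'' < I.fRank (M w') w),
      x w'' (M w') = 0 :=
    sum_eq_zero fun w'' hw'' => hM.eq_zero_of_fRank_lt hx ((mem_filter.1 hw'').2.trans hrank)
  have hpos := (hx.1 w (M w)).lt_of_ne' (hM w).1
  linarith [hx.2.2.2 w (M w')]

theorem apply_eq_of_wRank_eq {J : SMInstance n} {M' : Fin n → Fin n} (hM : IsWorstMap I x M)
    (hM' : IsWorstMap J x M') {w : Fin n} (h : I.wRank w = J.wRank w) : M w = M' w :=
  J.wRank_inj w <| le_antisymm ((hM' w).2 _ (hM w).1) (h ▸ (hM w).2 _ (hM' w).1)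

theorem inPolytope_peel (hx : InPolytope I x) (hM : IsWorstMap I x M) {t : ℝ} (ht0 : 0 ≤ t)
    (ht1 : t < 1) (hle : ∀ w, t ≤ x w (M w)) :
    InPolytope I ((1 - t)⁻¹ • (x - t • indicVec M)) := by
  have hbij := hM.bijective hx
  have hc : 0 ≤ (1 - t)⁻¹ := inv_nonneg.2 (sub_pos.2 ht1).le
  simp only [InPolytope, Pi.smul_apply, Pi.sub_apply, smul_eq_mul, ← mul_sum, sum_sub_distrib]
  refine ⟨fun w f => mul_nonneg hc ?_, fun w => ?_, fun f => ?_,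
    fun w f => mul_le_mul_of_nonneg_left ?_ hc⟩
  · unfold indicVec
    split_ifs with hf
    · subst hf; linarith [hle w]
    · linarith [hx.1 w f]
  · rw [hx.2.1 w, sum_indicVec_row, if_pos (mem_univ _), mul_one, inv_mul_cancel₀ (by linarith)]
  · obtain ⟨w₀, h⟩ := hbij.2 f
    rw [hx.2.2.1 f, sum_indicVec_col hbij.1 h, if_pos (mem_univ _), mul_one,
      inv_mul_cancel₀ (by linarith)]
  · obtain ⟨w₀, h⟩ := hbij.2 f
    rw [sum_indicVec_row, sum_indicVec_col hbij.1 h]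
    have hstab := hx.2.2.2 w f
    set L := univ.filter (fun f' => I.wRank w f < I.wRank w f')
    set R := univ.filter (fun w' => I.fRank f w' < I.fRank f w)
    have hle_one : t * (if w₀ ∈ R then 1 else 0) ≤ t := by split_ifs <;> linarith
    have hle_R : t * (if w₀ ∈ R then 1 else 0) ≤ ∑ w' ∈ R, x w' f := by
      split_ifs with hw₀
      · rw [mul_one, ← h]
        exact (hle w₀).trans (single_le_sum (fun w' _ => hx.1 w' (M w₀)) hw₀)
      · exact (mul_zero t).trans_le (sum_nonneg fun w' _ => hx.1 w' f)
    by_cases hworse : M w ∈ L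
    · rw [if_pos hworse]
      linarith
    · have hzero : ∑ f' ∈ L, x w f' = 0 := sum_eq_zero fun f' hf' => by
        by_contra hne
        exact hworse
          (mem_filter.2 ⟨mem_univ _, (mem_filter.1 hf').2.trans_le ((hM w).2 f' hne)⟩)
      rw [if_neg hworse, hzero]
      linarith

end IsWorstMap

end Polytope

section TwoInstances

variable {A B : SMInstance n} {w₁ : Fin n} {x : Fin n → Fin n → ℝ}

theorem exists_isWorstMap_of_wRank_eq (hW : ∀ w, w ≠ w₁ → A.wRank w = B.wRank w)
    (hxA : InPolytope A x) (hxB : InPolytope B x) :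
    ∃ M, IsWorstMap A x M ∧ IsWorstMap B x M := by
  obtain ⟨M, hM⟩ := hxA.exists_isWorstMap
  obtain ⟨M', hM'⟩ := hxB.exists_isWorstMap
  have hMM' : M = M' := (hM.bijective hxA).2.eq_of_injective_of_eqOn_compl_singleton
    (hM'.injective hxB) fun w hw => hM.apply_eq_of_wRank_eq hM' (hW w hw)
  exact ⟨M, hM, hMM' ▸ hM'⟩

theorem mem_convexHull_indicVec_of_inPolytope (hW : ∀ w, w ≠ w₁ → A.wRank w = B.wRank w)
    (hxA : InPolytope A x) (hxB : InPolytope B x) :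
    x ∈ convexHull ℝ {y | ∃ M, IsStable A M ∧ IsStable B M ∧ y = indicVec M} := by
  induction hk : (support (uncurry x)).ncard using Nat.strong_induction_on generalizing x with
  | _ k ih =>
  obtain ⟨M, hMA, hMB⟩ := exists_isWorstMap_of_wRank_eq hW hxA hxB
  have hM : indicVec M ∈ {y | ∃ M, IsStable A M ∧ IsStable B M ∧ y = indicVec M} :=
    ⟨M, hMA.isStable hxA, hMB.isStable hxB, rfl⟩
  by_cases hind : x = indicVec M
  · exact hind ▸ subset_convexHull ℝ _ hM
  obtain ⟨w₀, hw₀⟩ : ∃ w, x w (M w) < 1 := by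
    by_contra! h
    exact hind (hxA.eq_indicVec_of_one_le h)
  obtain ⟨v, -, hv⟩ := exists_min_image univ (fun w => x w (M w)) ⟨w₀, mem_univ w₀⟩
  set t := x v (M v)
  have ht0 : 0 ≤ t := hxA.1 v (M v)
  have ht1 : t < 1 := (hv w₀ (mem_univ w₀)).trans_lt hw₀
  have hle : ∀ w, t ≤ x w (M w) := fun w => hv w (mem_univ w)
  set y := (1 - t)⁻¹ • (x - t • indicVec M)
  have hxy : x = t • indicVec M + (1 - t) • y := by
    rw [smul_inv_smul₀ (sub_pos.2 ht1).ne', add_sub_cancel]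
  have hsupp : support (uncurry y) ⊂ support (uncurry x) := by
    refine ⟨fun p hp hx0 => hp ?_, fun hsub => ?_⟩
    · have hind0 : indicVec M p.1 p.2 = 0 :=
        if_neg fun (e : M p.1 = p.2) => (hMA p.1).1 (e ▸ hx0)
      simp [y, uncurry, hind0, show x p.1 p.2 = 0 from hx0]
    · have hy0 : y v (M v) = 0 := by simp [y, indicVec, t]
      exact hsub (show uncurry x (v, M v) ≠ 0 from (hMA v).1) hy0
  have hy := ih _ (hk ▸ Set.ncard_lt_ncard hsupp) (hMA.inPolytope_peel hxA ht0 ht1 hle)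
    (hMB.inPolytope_peel hxB ht0 ht1 hle) rfl
  exact hxy ▸ convex_convexHull ℝ _ (subset_convexHull ℝ _ hM) hy ht0 (by linarith)
    (by ring)

end TwoInstances

theorem stmt15_general {n : ℕ} (A B : SMInstance n) (w₁ : Fin n)
    (hW : ∀ w, w ≠ w₁ → A.wRank w = B.wRank w) :
    ({x : Fin n → Fin n → ℝ | InPolytope A x ∧ InPolytope B x} =
      convexHull ℝ {x : Fin n → Fin n → ℝ |
        ∃ M, IsStable A M ∧ IsStable B M ∧ x = indicVec M}) ∧
    (∀ x ∈ Set.extremePoints ℝ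
        {x : Fin n → Fin n → ℝ | InPolytope A x ∧ InPolytope B x},
      ∀ w f, x w f = 0 ∨ x w f = 1) ∧
    ((∃ x : Fin n → Fin n → ℝ, InPolytope A x ∧ InPolytope B x) ↔
      ∃ M, IsStable A M ∧ IsStable B M) := by
  have heq : {x : Fin n → Fin n → ℝ | InPolytope A x ∧ InPolytope B x} =
      convexHull ℝ {x : Fin n → Fin n → ℝ |
        ∃ M, IsStable A M ∧ IsStable B M ∧ x = indicVec M} := by
    refine Set.Subset.antisymm (fun x hx => mem_convexHull_indicVec_of_inPolytope hW hx.1 hx.2)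
      (convexHull_min ?_ ((convex_inPolytope A).inter (convex_inPolytope B)))
    rintro _ ⟨M, hA, hB, rfl⟩
    exact ⟨hA.inPolytope_indicVec, hB.inPolytope_indicVec⟩
  refine ⟨heq, fun x hx w f => ?_, ⟨fun ⟨x, hx⟩ => ?_, fun ⟨M, hA, hB⟩ => ?_⟩⟩
  · obtain ⟨M, -, -, rfl⟩ := extremePoints_convexHull_subset (heq ▸ hx)
    unfold indicVec
    split_ifs <;> simp
  · obtain ⟨-, M, hA, hB, -⟩ := convexHull_nonempty_iff.1 ⟨x, heq.subset hx⟩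
    exact ⟨M, hA, hB⟩
  · exact ⟨indicVec M, hA.inPolytope_indicVec, hB.inPolytope_indicVec⟩

/-- for (1,n) instances A and B, the polytope P_A ∩ P_B equals the convex
hull of the indicator vectors of the matchings stable under both A and B; in particular
every extreme point of P_A ∩ P_B is integral, and P_A ∩ P_B is nonempty iff some
matching is stable under both A and B. -/
theorem stmt15 {n : ℕ} (hn : 1 ≤ n) (A B : SMInstance n) (w₁ : Fin n)
    (hW : ∀ w, w ≠ w₁ → A.wRank w = B.wRank w) :
    ({x : Fin n → Fin n → ℝ | InPolytope A x ∧ InPolytope B x} =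
      convexHull ℝ {x : Fin n → Fin n → ℝ |
        ∃ M, IsStable A M ∧ IsStable B M ∧ x = indicVec M}) ∧
    (∀ x ∈ Set.extremePoints ℝ
        {x : Fin n → Fin n → ℝ | InPolytope A x ∧ InPolytope B x},
      ∀ w f, x w f = 0 ∨ x w f = 1) ∧
    ((∃ x : Fin n → Fin n → ℝ, InPolytope A x ∧ InPolytope B x) ↔
      ∃ M, IsStable A M ∧ IsStable B M) :=
  stmt15_general A B w₁ hW
end
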